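/- Let V := ⊕_{n∈ℤ} ℂ e_n be the complex vector space with basis {e_n : n ∈ ℤ}. Define invertible linear maps X_1, X_2 : V → V by X_1(e_n) = e_{n+1} and X_2(e_n) = 2^n e_{n+1} for all n ∈ ℤ. Then every linear subspace U ⊆ V satisfying X_1(U) = U and X_2(U) = U is either 0 or all of V. (In other words, the representation of the free group on two generators on V given by X_1 and X_2 is irreducible.) -/

import Mathlib

/-! Both operators are weighted shifts `e_n ↦ w n • e_{n+1}`, with weights `1` and `2 ^ n`.
If `v ∈ U` is nonzero and `n₀` lies in its support, then `X₂ v - 2 ^ n₀ • X₁ v ∈ U` has support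
`(supp v \ {n₀}) + 1`, because the weights `2 ^ n` are pairwise distinct. Iterating, `U` contains
some basis vector `e_m`, hence every `e_n`, since `X₁` and `X₁⁻¹` preserve `U`. -/

/-- The shift operator `X₁` on `V = ⊕_{n ∈ ℤ} ℂ e_n`, with `X₁ e_n = e_{n+1}`
(where `e_n = Finsupp.single n 1`). -/
noncomputable def shiftX₁ : (ℤ →₀ ℂ) →ₗ[ℂ] (ℤ →₀ ℂ) :=
  Finsupp.lift _ ℂ _ fun n => Finsupp.single (n + 1) 1

/-- The weighted shift operator `X₂` on `V = ⊕_{n ∈ ℤ} ℂ e_n`, with `X₂ e_n = 2^n e_{n+1}`. -/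
noncomputable def shiftX₂ : (ℤ →₀ ℂ) →ₗ[ℂ] (ℤ →₀ ℂ) :=
  Finsupp.lift _ ℂ _ fun n => ((2 : ℂ) ^ n) • Finsupp.single (n + 1) 1

open Finsupp Function

section Semiring

variable {R : Type*} [Semiring R]

noncomputable def weightedShift (w : ℤ → R) : (ℤ →₀ R) →ₗ[R] (ℤ →₀ R) :=
  Finsupp.lift _ R _ fun n => w n • single (n + 1) 1

theorem weightedShift_single (w : ℤ → R) (n : ℤ) (c : R) :
    weightedShift w (single n c) = single (n + 1) (c * w n) := by
  simp [weightedShift]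

theorem weightedShift_apply (w : ℤ → R) (v : ℤ →₀ R) (k : ℤ) :
    weightedShift w v k = v (k - 1) * w (k - 1) := by
  induction v using Finsupp.induction_linear with
  | zero => simp
  | add f g hf hg => rw [map_add, Finsupp.add_apply, Finsupp.add_apply, hf, hg, add_mul]
  | single n c =>
    rw [weightedShift_single, single_apply, single_apply]
    by_cases h : n = k - 1
    · simp [h]
    · rw [if_neg (by omega), if_neg h, zero_mul]

end Semiring

theorem Submodule.eq_top_of_forall_single_one_mem {R ι : Type*} [Semiring R]
    {U : Submodule R (ι →₀ R)} (h : ∀ n, single n 1 ∈ U) : U = ⊤ := by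
  rw [eq_top_iff, ← Finsupp.basisSingleOne.span_eq, Submodule.span_le]
  rintro _ ⟨n, rfl⟩
  simpa using h n

variable {K : Type*} [Field K] {w : ℤ → K}

theorem weightedShift_bijective (hw : ∀ n, w n ≠ 0) : Bijective (weightedShift w) := by
  refine ⟨(injective_iff_map_eq_zero _).2 fun v hv => ?_, ?_⟩
  · ext k
    simpa [weightedShift_apply, hw] using congr($hv (k + 1))
  · rw [← LinearMap.range_eq_top]
    refine Submodule.eq_top_of_forall_single_one_mem fun n => ⟨single (n - 1) (w (n - 1))⁻¹, ?_⟩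
    simp [weightedShift_single, hw]

theorem support_weightedShift_sub_smul_shift (hw : Injective w) (v : ℤ →₀ K) (n₀ : ℤ) :
    (weightedShift w v - w n₀ • weightedShift 1 v).support =
      (v.support.erase n₀).map (Equiv.addRight 1).toEmbedding := by
  ext k
  have hk : (weightedShift w v - w n₀ • weightedShift 1 v) k =
      v (k - 1) * (w (k - 1) - w n₀) := by
    simp only [Finsupp.sub_apply, Finsupp.smul_apply, weightedShift_apply, Pi.one_apply,
      smul_eq_mul]
    ring
  rw [mem_support_iff, hk, mul_ne_zero_iff, sub_ne_zero, hw.ne_iff, Finset.mem_map_equiv,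
    Finset.mem_erase, mem_support_iff]
  simp [sub_eq_add_neg, and_comm]

variable {U : Submodule K (ℤ →₀ K)}

theorem exists_single_one_mem_of_ne_bot (hw : Injective w) (h₁ : U.map (weightedShift 1) ≤ U)
    (h : U.map (weightedShift w) ≤ U) (hU : U ≠ ⊥) : ∃ m, single m (1 : K) ∈ U := by
  suffices key : ∀ (n : ℕ) (v : ℤ →₀ K), v ∈ U → v.support.card = n + 1 → ∃ m, single m 1 ∈ U by
    obtain ⟨v, hv, hv0⟩ := U.ne_bot_iff.1 hU
    obtain ⟨n, hn⟩ := Nat.exists_eq_succ_of_ne_zero (by simpa using hv0 : v.support.card ≠ 0)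
    exact key n v hv hn
  intro n
  induction n with
  | zero =>
    intro v hv hcard
    obtain ⟨m, c, hc, rfl⟩ := card_support_eq_one'.1 hcard
    refine ⟨m, ?_⟩
    simpa [hc] using U.smul_mem c⁻¹ hv
  | succ n ih =>
    intro v hv hcard
    obtain ⟨n₀, hn₀⟩ := Finset.card_pos.1 (by omega : 0 < v.support.card)
    refine ih _ (U.sub_mem (h ⟨v, hv, rfl⟩) (U.smul_mem (w n₀) (h₁ ⟨v, hv, rfl⟩))) ?_
    rw [support_weightedShift_sub_smul_shift hw, Finset.card_map, Finset.card_erase_of_mem hn₀,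
      hcard, Nat.add_sub_cancel]

theorem eq_top_of_single_one_mem (h₁ : U.map (weightedShift 1) = U) {m : ℤ}
    (hm : single m (1 : K) ∈ U) : U = ⊤ := by
  have hinj : Injective (weightedShift (1 : ℤ → K)) :=
    (weightedShift_bijective fun _ => one_ne_zero).injective
  have step (n : ℤ) : single n (1 : K) ∈ U ↔ single (n + 1) (1 : K) ∈ U := by
    have hn : weightedShift 1 (single n (1 : K)) = single (n + 1) 1 := by
      simp [weightedShift_single]
    rw [← hn]
    nth_rw 2 [← h₁]
    simp only [Submodule.mem_map, hinj.eq_iff, exists_eq_right]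
  refine Submodule.eq_top_of_forall_single_one_mem fun n => ?_
  induction n using Int.inductionOn' (b := m) with
  | zero => exact hm
  | succ k _ hk => exact (step k).1 hk
  | pred k _ hk => exact (step (k - 1)).2 (by rwa [sub_add_cancel])

theorem two_zpow_injective : Injective fun n : ℤ => (2 : ℂ) ^ n := by
  simpa [Function.comp_def] using
    Complex.ofReal_injective.comp (zpow_right_injective₀ (two_pos : (0 : ℝ) < 2) (by norm_num))

/-- `X₁` and `X₂` are invertible linear maps, and every linear subspace `U` of
`V = ⊕_{n ∈ ℤ} ℂ e_n` with `X₁(U) = U` and `X₂(U) = U` is `0` or `V`; i.e. the representation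
of the free group on two generators given by `X₁, X₂` is irreducible. -/
theorem statement4 :
    Function.Bijective shiftX₁ ∧ Function.Bijective shiftX₂ ∧
    ∀ U : Submodule ℂ (ℤ →₀ ℂ),
      U.map shiftX₁ = U → U.map shiftX₂ = U → U = ⊥ ∨ U = ⊤ := by
  have hX₁ : shiftX₁ = weightedShift 1 := by
    simp only [shiftX₁, weightedShift, Pi.one_apply, one_smul]
  have hX₂ : shiftX₂ = weightedShift fun n => 2 ^ n := rfl
  rw [hX₁, hX₂]
  refine ⟨weightedShift_bijective fun _ => one_ne_zero,
    weightedShift_bijective fun n => zpow_ne_zero n two_ne_zero, fun U hU₁ hU₂ => ?_⟩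
  refine or_iff_not_imp_left.2 fun hU => ?_
  obtain ⟨m, hm⟩ := exists_single_one_mem_of_ne_bot two_zpow_injective hU₁.le hU₂.le hU
  exact eq_top_of_single_one_mem hU₁ hm
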